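/- arXiv:1704.03935 — 2 statements merged into one kernel-verified Lean document; each statement's English description precedes it below -/
import Mathlib

section
/- Let L : ℝⁿ × ℝⁿ × ℝ → ℝ be continuously differentiable with (∂L/∂S)(q, v, S) < 0 everywhere, and F^fr : ℝⁿ × ℝⁿ × ℝ → ℝⁿ. On 𝒫 := ℝⁿ × ℝ × ℝⁿ × ℝ × ℝⁿ × ℝ with points x = (q, S, v, W, p, Λ), define Δ_𝒫(x) := {(δq, δS, δv, δW, δp, δΛ) : (δq, δS) ∈ C_V(q, v, S)}, the presymplectic form ω_𝒫((a, σ, b, τ, c, λ), (a′, σ′, b′, τ′, c′, λ′)) := ⟨a, c′⟩ − ⟨a′, c⟩ + σλ′ − σ′λ, and the generalized energy ℰ(x) := ⟨p, v⟩ + ΛW − L(q, v, S), whose differential identified with a vector is dℰ(x) = (−∂L/∂q, −∂L/∂S, p − ∂L/∂v, Λ, v, W). Then a C¹ curve x(t) = (q(t), S(t), v(t), W(t), p(t), Λ(t)) satisfies the Dirac dynamical system (ẋ(t), dℰ(x(t))) ∈ D(ω_𝒫, Δ_𝒫(x(t))) for all t if and only if for all t: (∂L/∂S)·(ṗ − ∂L/∂q)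 = −(Λ̇ − ∂L/∂S)·F^fr, (∂L/∂S)·Ṡ = ⟨F^fr, q̇⟩, p = ∂L/∂v, Λ = 0, v = q̇, and W = Ṡ, where all partial derivatives and F^fr are evaluated at (q(t), v(t), S(t)). -/
open scoped RealInnerProductSpace

noncomputable section

/-- `ℝⁿ` with the Euclidean inner product. -/
abbrev E (n : ℕ) : Type := EuclideanSpace ℝ (Fin n)

/-- The Pontryagin bundle `𝒫 = T𝒬 ⊕ T*𝒬` of `𝒬 = ℝⁿ × ℝ`, with points
`x = (q, S, v, W, p, Λ)`. -/
abbrev P (n : ℕ) : Type := E n × ℝ × E n × ℝ × E n × ℝ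

/-- Gradient `∂L/∂q` of the Lagrangian `L(q, v, S)`. -/
noncomputable def gQ {n : ℕ} (L : E n → E n → ℝ → ℝ) (q v : E n) (S : ℝ) : E n :=
  gradient (fun x => L x v S) q

/-- Gradient `∂L/∂v` of the Lagrangian `L(q, v, S)`. -/
noncomputable def gV {n : ℕ} (L : E n → E n → ℝ → ℝ) (q v : E n) (S : ℝ) : E n :=
  gradient (fun y => L q y S) v

/-- Partial derivative `∂L/∂S` of the Lagrangian `L(q, v, S)`. -/
noncomputable def LS {n : ℕ} (L : E n → E n → ℝ → ℝ) (q v : E n) (S : ℝ) : ℝ :=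
  deriv (L q v) S

/-- The Dirac structure induced by a form `ω` and a subspace `Δ`, covectors being
identified with vectors via the pairing `pair` (the Euclidean inner product). -/
def Dirac {F : Type*} (pair ω : F → F → ℝ) (Δ : Set F) : Set (F × F) :=
  {p | p.1 ∈ Δ ∧ ∀ w ∈ Δ, pair p.2 w = ω p.1 w}

/-- Euclidean pairing on `𝒫`. -/
def pairP {n : ℕ} (ζ w : P n) : ℝ :=
  ⟪ζ.1, w.1⟫ + ζ.2.1 * w.2.1 + ⟪ζ.2.2.1, w.2.2.1⟫ + ζ.2.2.2.1 * w.2.2.2.1 +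
    ⟪ζ.2.2.2.2.1, w.2.2.2.2.1⟫ + ζ.2.2.2.2.2 * w.2.2.2.2.2

/-- Presymplectic form
`ω_𝒫((a,σ,b,τ,c,λ),(a',σ',b',τ',c',λ')) = ⟨a,c'⟩ − ⟨a',c⟩ + σλ' − σ'λ` on `𝒫`. -/
def omegaP {n : ℕ} (x y : P n) : ℝ :=
  ⟪x.1, y.2.2.2.2.1⟫ - ⟪y.1, x.2.2.2.2.1⟫ + x.2.1 * y.2.2.2.2.2 - y.2.1 * x.2.2.2.2.2

lemma key {n : ℕ} (c : ℝ) (hc : c ≠ 0) (F gq gv dq dv dp v p : E n)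
    (dS dW dΛ Λ W : ℝ) :
    ((⟨dq, dS, dv, dW, dp, dΛ⟩ : P n), (⟨-gq, -c, p - gv, Λ, v, W⟩ : P n)) ∈
      Dirac pairP omegaP {δ : P n | c * δ.2.1 = ⟪F, δ.1⟫} ↔
    (c • (dp - gq) = -((dΛ - c) • F) ∧ c * dS = ⟪F, dq⟫ ∧ p = gv ∧ Λ = 0 ∧
      v = dq ∧ W = dS) := by
  simp only [Dirac, Set.mem_setOf_eq, pairP, omegaP]
  constructor
  · rintro ⟨h1, h2⟩
    have hp : p = gv := by
      have h := h2 ⟨0, 0, p - gv, 0, 0, 0⟩ (by simp)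
      simp only [inner_zero_right, inner_zero_left, mul_zero, zero_mul, add_zero,
        zero_add, sub_zero, zero_sub, neg_zero] at h
      exact sub_eq_zero.mp (inner_self_eq_zero.mp h)
    have hΛ : Λ = 0 := by
      have h := h2 ⟨0, 0, 0, 1, 0, 0⟩ (by simp)
      simp only [inner_zero_right, inner_zero_left, mul_zero, zero_mul, add_zero,
        zero_add, sub_zero, zero_sub, neg_zero, mul_one] at h
      linarith
    have hv : v = dq := by
      have h := h2 ⟨0, 0, 0, 0, v - dq, 0⟩ (by simp)
      simp only [inner_zero_right, inner_zero_left, mul_zero, zero_mul, add_zero,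
        zero_add, sub_zero, zero_sub, neg_zero] at h
      rw [inner_sub_right, inner_sub_right] at h
      have hvv : ⟪v - dq, v - dq⟫ = 0 := by
        rw [inner_sub_left, inner_sub_right, inner_sub_right]
        have := real_inner_comm v dq
        linarith
      exact sub_eq_zero.mp (inner_self_eq_zero.mp hvv)
    have hW : W = dS := by
      have h := h2 ⟨0, 0, 0, 0, 0, 1⟩ (by simp)
      simp only [inner_zero_right, inner_zero_left, mul_zero, zero_mul, add_zero,
        zero_add, sub_zero, zero_sub, neg_zero, mul_one] at h
      linarith
    have heq : ∀ a : E n, c * ⟪dp - gq, a⟫ = (c - dΛ) * ⟪F, a⟫ := by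
      intro a
      have h := h2 ⟨a, ⟪F, a⟫ / c, 0, 0, 0, 0⟩ (by field_simp)
      simp only [inner_zero_right, inner_zero_left, mul_zero, zero_mul, add_zero,
        zero_add, sub_zero, zero_sub, neg_zero, inner_neg_left] at h
      have hcd : c * (⟪F, a⟫ / c) = ⟪F, a⟫ := mul_div_cancel₀ _ hc
      rw [inner_sub_left]
      linear_combination c * h + (c - dΛ) * hcd - c * real_inner_comm dp a
    have hX : c • (dp - gq) + (dΛ - c) • F = 0 := by
      set X := c • (dp - gq) + (dΛ - c) • F with hXdef
      have : ⟪X, X⟫ = 0 := by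
        rw [hXdef, inner_add_left, real_inner_smul_left, real_inner_smul_left]
        have := heq X
        linarith
      exact inner_self_eq_zero.mp this
    exact ⟨eq_neg_of_add_eq_zero_left hX, h1, hp, hΛ, hv, hW⟩
  · rintro ⟨e1, e2, e3, e4, e5, e6⟩
    subst e3; subst e4; subst e5; subst e6
    refine ⟨e2, ?_⟩
    rintro ⟨a, σ, b, τ, cc, lam⟩ hw
    simp only [Set.mem_setOf_eq] at hw
    have h1 : c * ⟪dp - gq, a⟫ = (c - dΛ) * ⟪F, a⟫ := by
      have h := congrArg (fun x => ⟪x, a⟫) e1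
      simp only [real_inner_smul_left, inner_neg_left] at h
      linarith
    have h2 : ⟪dp - gq, a⟫ = (c - dΛ) * σ := by
      apply mul_left_cancel₀ hc
      rw [h1, ← hw]; ring
    rw [inner_sub_left] at h2
    have hca : ⟪a, dp⟫ = ⟪dp, a⟫ := real_inner_comm dp a
    simp only [inner_neg_left, sub_self, inner_zero_left, zero_mul, add_zero]
    linarith

/-- the Dirac dynamical system on the Pontryagin bundle `𝒫`, with
generalized energy `ℰ(x) = ⟨p,v⟩ + ΛW − L(q,v,S)`, is equivalent to the implicit
differential-algebraic equations for the thermodynamics of simple systems. -/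
theorem statement10 {n : ℕ} (L : E n → E n → ℝ → ℝ)
    (hL : ContDiff ℝ 1 (fun x : E n × E n × ℝ => L x.1 x.2.1 x.2.2))
    (hLS : ∀ (q v : E n) (S : ℝ), LS L q v S < 0)
    (Ffr : E n → E n → ℝ → E n)
    (q v p : ℝ → E n) (S W Λ : ℝ → ℝ)
    (hq : ContDiff ℝ 1 q) (hv : ContDiff ℝ 1 v) (hp : ContDiff ℝ 1 p)
    (hS : ContDiff ℝ 1 S) (hW : ContDiff ℝ 1 W) (hΛ : ContDiff ℝ 1 Λ) :
    (∀ t : ℝ,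
      ((⟨deriv q t, deriv S t, deriv v t, deriv W t, deriv p t, deriv Λ t⟩ : P n),
       (⟨-(gQ L (q t) (v t) (S t)), -(LS L (q t) (v t) (S t)),
          p t - gV L (q t) (v t) (S t), Λ t, v t, W t⟩ : P n)) ∈
        Dirac pairP omegaP
          {δ : P n | LS L (q t) (v t) (S t) * δ.2.1 = ⟪Ffr (q t) (v t) (S t), δ.1⟫}) ↔
    (∀ t : ℝ,
      LS L (q t) (v t) (S t) • (deriv p t - gQ L (q t) (v t) (S t)) =
        -((deriv Λ t - LS L (q t) (v t) (S t)) • Ffr (q t) (v t) (S t)) ∧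
      LS L (q t) (v t) (S t) * deriv S t = ⟪Ffr (q t) (v t) (S t), deriv q t⟫ ∧
      p t = gV L (q t) (v t) (S t) ∧ Λ t = 0 ∧
      v t = deriv q t ∧ W t = deriv S t) := by
  exact forall_congr' fun t =>
    key (LS L (q t) (v t) (S t)) (ne_of_lt (hLS (q t) (v t) (S t)))
      (Ffr (q t) (v t) (S t)) (gQ L (q t) (v t) (S t)) (gV L (q t) (v t) (S t))
      (deriv q t) (deriv v t) (deriv p t) (v t) (p t)
      (deriv S t) (deriv W t) (deriv Λ t) (Λ t) (W t)

end
end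

section
/- Let L : ℝⁿ × ℝⁿ × ℝ → ℝ be continuously differentiable, F^fr : ℝⁿ × ℝⁿ × ℝ → ℝⁿ, and let v̄ : ℝⁿ × ℝⁿ × ℝ → ℝⁿ (arguments (q, p, S)) be continuously differentiable with (∂L/∂v)(q, v̄(q, p, S), S) = p for all (q, p, S) and v̄(q, (∂L/∂v)(q, v, S), S) = v for all (q, v, S). Define H(q, p, S) := ⟨p, v̄(q, p, S)⟩ − L(q, v̄(q, p, S), S) and ℱ^fr(q, p, S) := F^fr(q, v̄(q, p, S), S). Then a C¹ curve (q(t), S(t), p(t)) satisfies ṗ = −∂H/∂q + ℱ^fr, q̇ = ∂H/∂p, (∂H/∂S)·Ṡ = −⟨ℱ^fr, q̇⟩ (derivatives of H and ℱ^fr evaluated at (q(t), p(t), S(t))) if and only if the curve (q(t), S(t), v(t), p(t)) with v(t) := v̄(q(t), p(t), S(t)) satisfies ṗ − (∂L/∂q)(q, v, S) = F^fr(q, v, S), (∂L/∂S)(q, v, S)·Ṡ = ⟨F^fr(q, v, S), q̇⟩, p = (∂L/∂v)(q, v, S), and v = q̇. -/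
open scoped RealInnerProductSpace

noncomputable section

/-!
Put `v = v̄(q, p, S)`. Since `∂L/∂v(q, v̄, S) = p`, the variation of `v̄` drops out of the
differential of `H = ⟪p, v̄⟫ - L(q, v̄, S)` (envelope argument), so
`∂H/∂q = -∂L/∂q`, `∂H/∂p = v̄` and `∂H/∂S = -∂L/∂S`, all evaluated at `(q, v̄, S)`.
Substituting these, the Hamiltonian equations become the Lagrangian ones term by term, and
the Legendre relation `p = ∂L/∂v(q, v, S)` holds automatically.
-/

def uncurry₃ {α β γ δ : Type*} (f : α → β → γ → δ) (x : α × β × γ) : δ :=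
  f x.1 x.2.1 x.2.2

section Partials

variable {n : ℕ} {f : E n → E n → ℝ → ℝ} {a b : E n} {c : ℝ}

theorem inner_gQ_eq_fderiv (hf : DifferentiableAt ℝ (uncurry₃ f) (a, b, c)) (w : E n) :
    ⟪gQ f a b c, w⟫ = fderiv ℝ (uncurry₃ f) (a, b, c) (w, 0, 0) := by
  have h := HasFDerivAt.comp (g := uncurry₃ f) a hf.hasFDerivAt
    (hasFDerivAt_prodMk_left (𝕜 := ℝ) a (b, c))
  rw [gQ, gradient, InnerProductSpace.toDual_symm_apply]
  exact DFunLike.congr_fun h.fderiv w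

theorem inner_gV_eq_fderiv (hf : DifferentiableAt ℝ (uncurry₃ f) (a, b, c)) (w : E n) :
    ⟪gV f a b c, w⟫ = fderiv ℝ (uncurry₃ f) (a, b, c) (0, w, 0) := by
  have h := HasFDerivAt.comp (g := uncurry₃ f) b hf.hasFDerivAt
    ((hasFDerivAt_prodMk_right a (b, c)).comp b (hasFDerivAt_prodMk_left (𝕜 := ℝ) b c))
  rw [gV, gradient, InnerProductSpace.toDual_symm_apply]
  exact DFunLike.congr_fun h.fderiv w

theorem LS_eq_fderiv (hf : DifferentiableAt ℝ (uncurry₃ f) (a, b, c)) :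
    LS f a b c = fderiv ℝ (uncurry₃ f) (a, b, c) (0, 0, 1) := by
  have h : HasDerivAt (f a b) (fderiv ℝ (uncurry₃ f) (a, b, c) (0, 0, 1)) c :=
    HasFDerivAt.comp_hasDerivAt (l := uncurry₃ f) c hf.hasFDerivAt
      ((hasDerivAt_const c a).prodMk ((hasDerivAt_const c b).prodMk (hasDerivAt_id c)))
  exact h.deriv

theorem fderiv_uncurry₃_apply (hf : DifferentiableAt ℝ (uncurry₃ f) (a, b, c))
    (u : E n × E n × ℝ) :
    fderiv ℝ (uncurry₃ f) (a, b, c) u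
      = ⟪gQ f a b c, u.1⟫ + ⟪gV f a b c, u.2.1⟫ + LS f a b c * u.2.2 := by
  have hu : u = (u.1, 0, 0) + (0, u.2.1, 0) + u.2.2 • ((0, 0, 1) : E n × E n × ℝ) := by
    ext <;> simp
  rw [inner_gQ_eq_fderiv hf, inner_gV_eq_fderiv hf, LS_eq_fderiv hf, mul_comm, ← smul_eq_mul,
    ← map_smul, ← map_add, ← map_add, ← hu]

theorem partials_eq_of_hasFDerivAt {D : E n × E n × ℝ →L[ℝ] ℝ}
    (hD : HasFDerivAt (uncurry₃ f) D (a, b, c)) {gq gv : E n} {s : ℝ}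
    (hDu : ∀ u, D u = ⟪gq, u.1⟫ + ⟪gv, u.2.1⟫ + s * u.2.2) :
    gQ f a b c = gq ∧ gV f a b c = gv ∧ LS f a b c = s := by
  have hf := hD.differentiableAt
  refine ⟨ext_inner_right ℝ fun w => ?_, ext_inner_right ℝ fun w => ?_, ?_⟩
  · simp [inner_gQ_eq_fderiv hf, hD.fderiv, hDu]
  · simp [inner_gV_eq_fderiv hf, hD.fderiv, hDu]
  · simp [LS_eq_fderiv hf, hD.fderiv, hDu]

end Partials

def legendreHamiltonian {n : ℕ} (L : E n → E n → ℝ → ℝ) (vbar : E n → E n → ℝ → E n)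
    (q p : E n) (S : ℝ) : ℝ :=
  ⟪p, vbar q p S⟫ - L q (vbar q p S) S

theorem partials_legendreHamiltonian {n : ℕ} {L : E n → E n → ℝ → ℝ}
    {vbar : E n → E n → ℝ → E n} {a b : E n} {c : ℝ}
    (hL : DifferentiableAt ℝ (uncurry₃ L) (a, vbar a b c, c))
    (hvbar : DifferentiableAt ℝ (uncurry₃ vbar) (a, b, c))
    (hleg : gV L a (vbar a b c) c = b) :
    gQ (legendreHamiltonian L vbar) a b c = -gQ L a (vbar a b c) c ∧
      gV (legendreHamiltonian L vbar) a b c = vbar a b c ∧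
      LS (legendreHamiltonian L vbar) a b c = -LS L a (vbar a b c) c := by
  have hV := hvbar.hasFDerivAt
  have hpv := (hasFDerivAt_snd (p := (a, b, c))).fst.inner ℝ hV
  have hLv := HasFDerivAt.comp (g := uncurry₃ L) (a, b, c) hL.hasFDerivAt
    (hasFDerivAt_fst.prodMk (hV.prodMk hasFDerivAt_snd.snd))
  refine partials_eq_of_hasFDerivAt (hpv.sub hLv) fun u => ?_
  simp only [sub_apply, ContinuousLinearMap.comp_apply, ContinuousLinearMap.prod_apply,
    ContinuousLinearMap.coe_fst', ContinuousLinearMap.coe_snd', fderivInnerCLM_apply,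
    fderiv_uncurry₃_apply hL, hleg, uncurry₃, real_inner_comm u.2.1, inner_neg_left]
  ring

theorem statement18_general {n : ℕ} (L : E n → E n → ℝ → ℝ)
    (hL : ContDiff ℝ 1 (fun x : E n × E n × ℝ => L x.1 x.2.1 x.2.2))
    (Ffr : E n → E n → ℝ → E n)
    (vbar : E n → E n → ℝ → E n)
    (hvbar : ContDiff ℝ 1 (fun x : E n × E n × ℝ => vbar x.1 x.2.1 x.2.2))
    (hleg1 : ∀ (q p : E n) (S : ℝ), gV L q (vbar q p S) S = p)
    (H : E n → E n → ℝ → ℝ)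
    (hH : ∀ (q p : E n) (S : ℝ), H q p S = ⟪p, vbar q p S⟫ - L q (vbar q p S) S)
    (Ffr' : E n → E n → ℝ → E n)
    (hF : ∀ (q p : E n) (S : ℝ), Ffr' q p S = Ffr q (vbar q p S) S)
    (q p : ℝ → E n) (S : ℝ → ℝ)
    (v : ℝ → E n) (hv : ∀ t : ℝ, v t = vbar (q t) (p t) (S t)) :
    (∀ t : ℝ,
      deriv p t =
        -(gradient (fun x => H x (p t) (S t)) (q t)) + Ffr' (q t) (p t) (S t) ∧
      deriv q t = gradient (fun y => H (q t) y (S t)) (p t) ∧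
      deriv (fun s => H (q t) (p t) s) (S t) * deriv S t =
        -⟪Ffr' (q t) (p t) (S t), deriv q t⟫) ↔
    (∀ t : ℝ,
      deriv p t - gQ L (q t) (v t) (S t) = Ffr (q t) (v t) (S t) ∧
      LS L (q t) (v t) (S t) * deriv S t = ⟪Ffr (q t) (v t) (S t), deriv q t⟫ ∧
      p t = gV L (q t) (v t) (S t) ∧ v t = deriv q t) := by
  have hLd : Differentiable ℝ (uncurry₃ L) := hL.differentiable one_ne_zero
  have hvbard : Differentiable ℝ (uncurry₃ vbar) := hvbar.differentiable one_ne_zero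
  obtain rfl : H = legendreHamiltonian L vbar := funext fun q => funext fun p => funext (hH q p)
  obtain rfl : v = fun t => vbar (q t) (p t) (S t) := funext hv
  refine forall_congr' fun t => ?_
  obtain ⟨hHq, hHp, hHS⟩ := partials_legendreHamiltonian (hLd _) (hvbard _)
    (hleg1 (q t) (p t) (S t))
  change deriv p t = -gQ (legendreHamiltonian L vbar) (q t) (p t) (S t) + _ ∧
      deriv q t = gV (legendreHamiltonian L vbar) (q t) (p t) (S t) ∧
      LS (legendreHamiltonian L vbar) (q t) (p t) (S t) * _ = _ ↔ _
  rw [hHq, hHp, hHS, hF, hleg1, neg_neg, neg_mul, neg_inj, sub_eq_iff_eq_add',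
    eq_comm (a := vbar _ _ _)]
  tauto

/-- the partial Legendre transform maps solutions of the Hamiltonian
evolution equations on `N = T*Q × ℝ` bijectively to solutions of the implicit system
on `M = TQ ⊕ T*Q × ℝ`. Here `H(q,p,S) = ⟨p, v̄(q,p,S)⟩ − L(q, v̄(q,p,S), S)` and
`ℱ^fr(q,p,S) = F^fr(q, v̄(q,p,S), S)`, where `v̄` inverts the partial Legendre
transform `(q,v) ↦ (q, ∂L/∂v(q,v,S))`. -/
theorem statement18 {n : ℕ} (L : E n → E n → ℝ → ℝ)
    (hL : ContDiff ℝ 1 (fun x : E n × E n × ℝ => L x.1 x.2.1 x.2.2))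
    (Ffr : E n → E n → ℝ → E n)
    (vbar : E n → E n → ℝ → E n)
    (hvbar : ContDiff ℝ 1 (fun x : E n × E n × ℝ => vbar x.1 x.2.1 x.2.2))
    (hleg1 : ∀ (q p : E n) (S : ℝ), gV L q (vbar q p S) S = p)
    (hleg2 : ∀ (q v : E n) (S : ℝ), vbar q (gV L q v S) S = v)
    (H : E n → E n → ℝ → ℝ)
    (hH : ∀ (q p : E n) (S : ℝ), H q p S = ⟪p, vbar q p S⟫ - L q (vbar q p S) S)
    (Ffr' : E n → E n → ℝ → E n)
    (hF : ∀ (q p : E n) (S : ℝ), Ffr' q p S = Ffr q (vbar q p S) S)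
    (q p : ℝ → E n) (S : ℝ → ℝ)
    (hq : ContDiff ℝ 1 q) (hp : ContDiff ℝ 1 p) (hS : ContDiff ℝ 1 S)
    (v : ℝ → E n) (hv : ∀ t : ℝ, v t = vbar (q t) (p t) (S t)) :
    (∀ t : ℝ,
      deriv p t =
        -(gradient (fun x => H x (p t) (S t)) (q t)) + Ffr' (q t) (p t) (S t) ∧
      deriv q t = gradient (fun y => H (q t) y (S t)) (p t) ∧
      deriv (fun s => H (q t) (p t) s) (S t) * deriv S t =
        -⟪Ffr' (q t) (p t) (S t), deriv q t⟫) ↔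
    (∀ t : ℝ,
      deriv p t - gQ L (q t) (v t) (S t) = Ffr (q t) (v t) (S t) ∧
      LS L (q t) (v t) (S t) * deriv S t = ⟪Ffr (q t) (v t) (S t), deriv q t⟫ ∧
      p t = gV L (q t) (v t) (S t) ∧ v t = deriv q t) :=
  statement18_general L hL Ffr vbar hvbar hleg1 H hH Ffr' hF q p S v hv
end
end
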